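/- arXiv:1301.1491 — 4 statements merged into one kernel-verified Lean document; each statement's English description precedes it below -/
import Mathlib

section
/- Let G be a finite group of order n with 1/n ∈ ℓ. Then the set Λ = {λ_g : g ∈ G}, where λ_e = (1/n)Σ_{g∈G} δ_g and λ_h = δ_e − δ_h for h ≠ e, is an ℓ-basis of the group algebra ℓG. -/
/-- The family `Λ = {λ_g : g ∈ G}` in the group algebra `ℓG`:
`λ_e = (1/n)·Σ_{g∈G} δ_g` and `λ_h = δ_e − δ_h` for `h ≠ e`. -/
noncomputable def lambdaFamily {R G : Type*} [CommRing R] [Group G] [Fintype G]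
    [DecidableEq G] (u : R) (g : G) : MonoidAlgebra R G :=
  if g = 1 then u • ∑ h : G, MonoidAlgebra.of R G h
  else MonoidAlgebra.of R G 1 - MonoidAlgebra.of R G g

/-!
The `λ_g` span `ℓG`: `δ_h = δ_e - λ_h` for `h ≠ e`, and summing the `λ_h` over `h ≠ e` gives
`n δ_e - Σ_g δ_g = n (δ_e - λ_e)`, so `δ_e = λ_e + (1/n) Σ_{h ≠ e} λ_h`. A spanning family of
`|G|` vectors in the free module `ℓG` of rank `|G|` is a basis, because a surjective endomorphism
of a finitely generated module over a commutative ring is injective (Orzech).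
-/

open Finset Submodule

theorem Module.Basis.exists_basis_eq_of_span_eq_top {ι R M : Type*} [Finite ι] [Semiring R]
    [OrzechProperty R] [AddCommMonoid M] [Module R M] (b : Module.Basis ι R M) {v : ι → M}
    (hv : span R (Set.range v) = ⊤) : ∃ b' : Module.Basis ι R M, ⇑b' = v := by
  have : Module.Finite R M := Module.Finite.of_basis b
  let T := b.constr ℕ v
  have hT : Function.Bijective T :=
    OrzechProperty.bijective_of_surjective_endomorphism T <| by
      rw [← LinearMap.range_eq_top, b.constr_range, hv]
  exact ⟨b.map (LinearEquiv.ofBijective T hT), funext fun i => b.constr_basis ℕ v i⟩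

section lambdaFamily

variable {R G : Type*} [CommRing R] [Group G] [Fintype G] [DecidableEq G] (u : R)

theorem lambdaFamily_one :
    lambdaFamily u (1 : G) = u • ∑ h : G, MonoidAlgebra.of R G h := if_pos rfl

theorem lambdaFamily_of_ne_one {g : G} (hg : g ≠ 1) :
    lambdaFamily u g = MonoidAlgebra.of R G 1 - MonoidAlgebra.of R G g := if_neg hg

theorem sum_erase_one_lambdaFamily :
    ∑ g ∈ univ.erase (1 : G), lambdaFamily u g =
      Fintype.card G • MonoidAlgebra.of R G 1 - ∑ h : G, MonoidAlgebra.of R G h := by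
  rw [sum_congr rfl fun g hg => lambdaFamily_of_ne_one u (ne_of_mem_erase hg),
    sum_erase _ (sub_self _), sum_sub_distrib, sum_const, card_univ]

theorem of_one_eq_lambdaFamily (hu : (Fintype.card G : R) * u = 1) :
    MonoidAlgebra.of R G 1 =
      lambdaFamily u 1 + u • ∑ g ∈ univ.erase (1 : G), lambdaFamily u g := by
  rw [sum_erase_one_lambdaFamily, lambdaFamily_one, smul_sub, ← Nat.cast_smul_eq_nsmul R,
    smul_smul, mul_comm, hu, one_smul, add_sub_cancel]

theorem span_lambdaFamily (hu : (Fintype.card G : R) * u = 1) :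
    span R (Set.range (lambdaFamily (G := G) u)) = ⊤ := by
  set V := span R (Set.range (lambdaFamily (G := G) u))
  have mem : ∀ g : G, lambdaFamily u g ∈ V := fun g => subset_span ⟨g, rfl⟩
  have of_one_mem : MonoidAlgebra.of R G 1 ∈ V := by
    rw [of_one_eq_lambdaFamily u hu]
    exact V.add_mem (mem 1) (V.smul_mem u (V.sum_mem fun g _ => mem g))
  have of_mem (g : G) : MonoidAlgebra.of R G g ∈ V := by
    by_cases hg : g = 1
    · exact hg ▸ of_one_mem
    · simpa only [lambdaFamily_of_ne_one u hg, sub_sub_cancel] using V.sub_mem of_one_mem (mem g)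
  rw [eq_top_iff, ← (MonoidAlgebra.basis G R).span_eq, span_le]
  rintro _ ⟨g, rfl⟩
  exact of_mem g

end lambdaFamily

/-- Let `G` be a finite group of order `n` with `1/n = u ∈ ℓ`. Then the family
`Λ = {λ_g : g ∈ G}`, where `λ_e = (1/n)Σ_{g∈G} δ_g` and `λ_h = δ_e − δ_h` for `h ≠ e`,
is an `ℓ`-basis of the group algebra `ℓG`. -/
theorem lambda_isBasis {R G : Type*} [CommRing R] [Group G] [Fintype G] [DecidableEq G]
    (u : R) (hu : (Fintype.card G : R) * u = 1) :
    ∃ b : Module.Basis G R (MonoidAlgebra R G), ∀ g : G, b g = lambdaFamily u g := by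
  obtain ⟨b, hb⟩ :=
    (MonoidAlgebra.basis G R).exists_basis_eq_of_span_eq_top (span_lambdaFamily u hu)
  exact ⟨b, congrFun hb⟩
end

section
/- Let G be a group, A a G-algebra, and W = ℓG the regular G-module. Let M_G denote the algebra of finitely supported G×G matrices over ℓ, with G acting by g·e_{s,t} = e_{gs,gt}. Then the maps φ(a⋊g ⊗ m) = (a ⊗ m·ρ(g⁻¹)) ⋊ g and ψ(a ⊗ m ⋊ g) = (a ⋊ g) ⊗ m·ρ(g) are mutually inverse ℓ-algebra isomorphisms between (A ⋊ G) ⊗ M_G and (A ⊗ M_G) ⋊ G, where ρ(g) = Σ_t e_{gt,t} is the permutation matrix of g. -/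
open Finsupp

section

variable {R G A : Type*} [CommRing R] [Group G] [DecidableEq G] [NonUnitalRing A] [Module R A]
  [DistribMulAction G A] [SMulCommClass G R A]

/-- Crossed product multiplication on `A ⋊ G ≅ (G →₀ A)`: `(a⋊g)(b⋊h) = a(g·b) ⋊ gh`. -/
noncomputable def crossedMul (x y : G →₀ A) : G →₀ A :=
  Finsupp.sum x fun g a => Finsupp.sum y fun h b => Finsupp.single (g * h) (a * g • b)

/-- Multiplication on `(A ⋊ G) ⊗ M_G`, modelled as `(G × G) →₀ (A ⋊ G)`
(the element `(a⋊g) ⊗ e_{u,v}` being `single (u,v) (single g a)`): the tensor product of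
the crossed product multiplication with matrix multiplication. -/
noncomputable def tensMatMul (x y : (G × G) →₀ (G →₀ A)) : (G × G) →₀ (G →₀ A) :=
  Finsupp.sum x fun p c => Finsupp.sum y fun q d =>
    if p.2 = q.1 then Finsupp.single (p.1, q.2) (crossedMul c d) else 0

/-- Multiplication on `A ⊗ M_G`, modelled as `(G × G) →₀ A`
(the element `a ⊗ e_{u,v}` being `single (u,v) a`). -/
noncomputable def matAMul (x y : (G × G) →₀ A) : (G × G) →₀ A :=
  Finsupp.sum x fun p a => Finsupp.sum y fun q b =>
    if p.2 = q.1 then Finsupp.single (p.1, q.2) (a * b) else 0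

/-- The diagonal `G`-action on `A ⊗ M_G ≅ (G × G) →₀ A`, where `G` acts on `M_G` by
`g·e_{s,t} = e_{gs,gt}`. -/
noncomputable def diagAct (g : G) (x : (G × G) →₀ A) : (G × G) →₀ A :=
  Finsupp.sum x fun p a => Finsupp.single (g * p.1, g * p.2) (g • a)

/-- Crossed product multiplication on `(A ⊗ M_G) ⋊ G`, modelled as `G →₀ ((G × G) →₀ A)`
(the element `(a ⊗ e_{u,v}) ⋊ g` being `single g (single (u,v) a)`). -/
noncomputable def matCrossedMul (x y : G →₀ ((G × G) →₀ A)) : G →₀ ((G × G) →₀ A) :=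
  Finsupp.sum x fun g c => Finsupp.sum y fun h d =>
    Finsupp.single (g * h) (matAMul c (diagAct g d))

end

/-!
Both products are biadditive, so it suffices to compare them on elementary tensors, where
`φ (a⋊g ⊗ e_{u,v}) = (a ⊗ e_{u,gv}) ⋊ g` is a mere reindexing. For the product of
`a⋊g ⊗ e_{u,v}` and `b⋊h ⊗ e_{p,q}` the twist by `g` gives
`e_{u,gv} · g(e_{p,hq}) = e_{u,gv} e_{gp,ghq}`, which vanishes unless `v = p` and then equals
`e_{u,ghq}`, the image of `e_{u,v} e_{v,q} = e_{u,q}` in degree `gh`.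
-/

namespace Finsupp

variable {α β M N P : Type*} [AddCommMonoid M] [AddCommMonoid N] [AddCommMonoid P]

noncomputable def liftAddHom₂ (F : α → β → M →+ N →+ P) : (α →₀ M) →+ (β →₀ N) →+ P :=
  liftAddHom fun p => (liftAddHom fun q => (F p q).flip).flip

theorem liftAddHom₂_apply (F : α → β → M →+ N →+ P) (x : α →₀ M) (y : β →₀ N) :
    liftAddHom₂ F x y = x.sum fun p c => y.sum fun q d => F p q c d := by
  simp [liftAddHom₂, liftAddHom_apply, Finsupp.sum]

theorem liftAddHom₂_single_single (F : α → β → M →+ N →+ P) (p : α) (q : β) (c : M) (d : N) :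
    liftAddHom₂ F (single p c) (single q d) = F p q c d := by
  simp [liftAddHom₂]

end Finsupp

section MatrixUnits

variable {G A : Type*} [DecidableEq G] [NonUnitalRing A]

noncomputable def matAMulHom : ((G × G) →₀ A) →+ ((G × G) →₀ A) →+ ((G × G) →₀ A) :=
  liftAddHom₂ fun p q => if p.2 = q.1 then AddMonoidHom.mul.compr₂ (singleAddHom (p.1, q.2)) else 0

theorem matAMulHom_apply (x y : (G × G) →₀ A) : matAMulHom x y = matAMul x y := by
  rw [matAMulHom, liftAddHom₂_apply, matAMul]
  congr! with p _ q _
  split_ifs <;> rfl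

theorem matAMul_single_single (p q : G × G) (a b : A) :
    matAMul (single p a) (single q b) = if p.2 = q.1 then single (p.1, q.2) (a * b) else 0 := by
  rw [← matAMulHom_apply, matAMulHom, liftAddHom₂_single_single]
  split_ifs <;> rfl

end MatrixUnits

/-- The indices of `φ`, from `e_{u,v} ρ(g⁻¹) = e_{u,gv}`. -/
def crossedTensorIndexEquiv (G : Type*) [Group G] : ((G × G) × G) ≃ (G × (G × G)) where
  toFun x := (x.2, (x.1.1, x.2 * x.1.2))
  invFun y := ((y.2.1, y.1⁻¹ * y.2.2), y.1)
  left_inv := by rintro ⟨⟨u, v⟩, g⟩; simp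
  right_inv := by rintro ⟨g, r, t⟩; simp

section Reindexing

variable (R : Type*) {G A : Type*} [Semiring R] [Group G] [AddCommMonoid A] [Module R A]

noncomputable def crossedTensorEquiv : ((G × G) →₀ (G →₀ A)) ≃ₗ[R] (G →₀ ((G × G) →₀ A)) :=
  (curryLinearEquiv R).symm ≪≫ₗ Finsupp.domLCongr (crossedTensorIndexEquiv G) ≪≫ₗ
    curryLinearEquiv R

variable {R}

theorem crossedTensorEquiv_single (u v g : G) (a : A) :
    crossedTensorEquiv R (single (u, v) (single g a)) = single g (single (u, g * v) a) := by
  simp [crossedTensorEquiv, crossedTensorIndexEquiv]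

theorem crossedTensorEquiv_symm_single (g r t : G) (a : A) :
    (crossedTensorEquiv R).symm (single g (single (r, t) a)) =
      single (r, g⁻¹ * t) (single g a) := by
  rw [LinearEquiv.symm_apply_eq, crossedTensorEquiv_single, mul_inv_cancel_left]

end Reindexing

section CrossedProducts

variable {G A : Type*} [Group G] [NonUnitalRing A] [DistribMulAction G A]

noncomputable def crossedMulHom : (G →₀ A) →+ (G →₀ A) →+ (G →₀ A) :=
  liftAddHom₂ fun g h =>
    (AddMonoidHom.mul.compl₂ (DistribSMul.toAddMonoidHom A g)).compr₂ (singleAddHom (g * h))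

theorem crossedMulHom_apply (x y : G →₀ A) : crossedMulHom x y = crossedMul x y := by
  rw [crossedMulHom, liftAddHom₂_apply]
  rfl

theorem crossedMul_single_single (g h : G) (a b : A) :
    crossedMul (single g a) (single h b) = single (g * h) (a * g • b) := by
  rw [← crossedMulHom_apply, crossedMulHom, liftAddHom₂_single_single]
  rfl

noncomputable def diagActHom (g : G) : ((G × G) →₀ A) →+ ((G × G) →₀ A) :=
  liftAddHom fun p => (singleAddHom (g * p.1, g * p.2)).comp (DistribSMul.toAddMonoidHom A g)

theorem diagActHom_apply (g : G) (x : (G × G) →₀ A) : diagActHom g x = diagAct g x := by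
  rw [diagActHom, liftAddHom_apply]
  rfl

theorem diagAct_single (g : G) (p : G × G) (a : A) :
    diagAct g (single p a) = single (g * p.1, g * p.2) (g • a) := by
  rw [← diagActHom_apply, diagActHom, liftAddHom_apply_single]
  rfl

variable [DecidableEq G]

noncomputable def tensMatMulHom :
    ((G × G) →₀ (G →₀ A)) →+ ((G × G) →₀ (G →₀ A)) →+ ((G × G) →₀ (G →₀ A)) :=
  liftAddHom₂ fun p q => if p.2 = q.1 then crossedMulHom.compr₂ (singleAddHom (p.1, q.2)) else 0

theorem tensMatMulHom_apply (x y : (G × G) →₀ (G →₀ A)) :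
    tensMatMulHom x y = tensMatMul x y := by
  rw [tensMatMulHom, liftAddHom₂_apply, tensMatMul]
  congr! with p _ q _
  split_ifs
  · simp [crossedMulHom_apply]
  · rfl

theorem tensMatMul_single_single (p q : G × G) (c d : G →₀ A) :
    tensMatMul (single p c) (single q d) =
      if p.2 = q.1 then single (p.1, q.2) (crossedMul c d) else 0 := by
  rw [← tensMatMulHom_apply, tensMatMulHom, liftAddHom₂_single_single]
  split_ifs <;> simp [crossedMulHom_apply]

noncomputable def matCrossedMulHom :
    (G →₀ ((G × G) →₀ A)) →+ (G →₀ ((G × G) →₀ A)) →+ (G →₀ ((G × G) →₀ A)) :=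
  liftAddHom₂ fun g h => (matAMulHom.compl₂ (diagActHom g)).compr₂ (singleAddHom (g * h))

theorem matCrossedMulHom_apply (x y : G →₀ ((G × G) →₀ A)) :
    matCrossedMulHom x y = matCrossedMul x y := by
  rw [matCrossedMulHom, liftAddHom₂_apply, matCrossedMul]
  simp [matAMulHom_apply, diagActHom_apply]

theorem matCrossedMul_single_single (g h : G) (c d : (G × G) →₀ A) :
    matCrossedMul (single g c) (single h d) = single (g * h) (matAMul c (diagAct g d)) := by
  rw [← matCrossedMulHom_apply, matCrossedMulHom, liftAddHom₂_single_single]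
  simp [matAMulHom_apply, diagActHom_apply]

variable {R : Type*} [Semiring R] [Module R A]

theorem crossedTensorEquiv_tensMatMul_single_single (u v g p q h : G) (a b : A) :
    crossedTensorEquiv R (tensMatMul (single (u, v) (single g a)) (single (p, q) (single h b))) =
      matCrossedMul (crossedTensorEquiv R (single (u, v) (single g a)))
        (crossedTensorEquiv R (single (p, q) (single h b))) := by
  rw [crossedTensorEquiv_single, crossedTensorEquiv_single, tensMatMul_single_single,
    matCrossedMul_single_single, diagAct_single, matAMul_single_single]
  by_cases hvp : v = p
  · subst hvp
    rw [if_pos rfl, if_pos rfl, crossedMul_single_single, crossedTensorEquiv_single, mul_assoc]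
  · rw [if_neg hvp, if_neg (by simpa using hvp), map_zero, single_zero]

theorem crossedTensorEquiv_tensMatMul (x y : (G × G) →₀ (G →₀ A)) :
    crossedTensorEquiv R (tensMatMul x y) =
      matCrossedMul (crossedTensorEquiv R x) (crossedTensorEquiv R y) := by
  let e := (crossedTensorEquiv R (G := G) (A := A)).toAddMonoidHom
  suffices tensMatMulHom.compr₂ e = (matCrossedMulHom.compl₂ e).comp e by
    simpa [e, tensMatMulHom_apply, matCrossedMulHom_apply] using congr($this x y)
  ext ⟨u, v⟩ g a ⟨p, q⟩ h b : 6
  simpa [e, tensMatMulHom_apply, matCrossedMulHom_apply] using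
    crossedTensorEquiv_tensMatMul_single_single u v g p q h a b

end CrossedProducts

section

variable {R G A : Type*} [CommRing R] [Group G] [DecidableEq G] [NonUnitalRing A] [Module R A]
  [DistribMulAction G A] [SMulCommClass G R A]

theorem crossed_tensor_matrices_iso_general :
    ∃ e : ((G × G) →₀ (G →₀ A)) ≃ₗ[R] (G →₀ ((G × G) →₀ A)),
      (∀ (u v g : G) (a : A),
        e (Finsupp.single (u, v) (Finsupp.single g a)) =
          Finsupp.single g (Finsupp.single (u, g * v) a)) ∧
      (∀ (g r t : G) (a : A),
        e.symm (Finsupp.single g (Finsupp.single (r, t) a)) =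
          Finsupp.single (r, g⁻¹ * t) (Finsupp.single g a)) ∧
      (∀ x y : (G × G) →₀ (G →₀ A), e (tensMatMul x y) = matCrossedMul (e x) (e y)) :=
  ⟨crossedTensorEquiv R, crossedTensorEquiv_single, crossedTensorEquiv_symm_single,
    crossedTensorEquiv_tensMatMul⟩

/-- Let `G` be a group and `A` a `G`-algebra. The maps
`φ(a⋊g ⊗ e_{u,v}) = (a ⊗ e_{u,v}·ρ(g⁻¹)) ⋊ g = (a ⊗ e_{u,gv}) ⋊ g` and
`ψ(a ⊗ e_{r,t} ⋊ g) = (a⋊g) ⊗ e_{r,t}·ρ(g) = (a⋊g) ⊗ e_{r,g⁻¹t}` are mutually inverse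
`ℓ`-algebra isomorphisms between `(A ⋊ G) ⊗ M_G` and `(A ⊗ M_G) ⋊ G`, where `ρ(g)` is the
permutation matrix of `g`. -/
theorem crossed_tensor_matrices_iso
    (hmul : ∀ (g : G) (a b : A), g • (a * b) = (g • a) * (g • b)) :
    ∃ e : ((G × G) →₀ (G →₀ A)) ≃ₗ[R] (G →₀ ((G × G) →₀ A)),
      (∀ (u v g : G) (a : A),
        e (Finsupp.single (u, v) (Finsupp.single g a)) =
          Finsupp.single g (Finsupp.single (u, g * v) a)) ∧
      (∀ (g r t : G) (a : A),
        e.symm (Finsupp.single g (Finsupp.single (r, t) a)) =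
          Finsupp.single (r, g⁻¹ * t) (Finsupp.single g a)) ∧
      (∀ x y : (G × G) →₀ (G →₀ A), e (tensMatMul x y) = matCrossedMul (e x) (e y)) :=
  crossed_tensor_matrices_iso_general

end
end

section
/- Let H ≤ G and A a G-algebra. Then the map sending ξ_H(s,b) to χ_{sH} ⊗ (s·b) is an isomorphism of G-algebras Ind_H^G(Res_H^G A) ≅ ℓ^{(G/H)} ⊗ A, where ℓ^{(G/H)} is the algebra of finitely supported functions G/H → ℓ with pointwise multiplication and G acting by translation of cosets. -/
/-! An element `f` of `Ind_H^G(Res_H^G A)` satisfies `f (s * h) = h⁻¹ • f s`, so `s • f s`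
depends only on the coset `sH`; this turns `f` into a finitely supported function on `G ⧸ H`,
with inverse `x ↦ (s ↦ s⁻¹ • x sH)`. Since both multiplications are pointwise, the map is
multiplicative because each `s` acts multiplicatively, and it is equivariant because
translating `f` by `g` moves the value `s • f s` from `sH` to `gsH` and multiplies it by `g`. -/

section

variable {R G : Type*} [CommRing R] [Group G] (H : Subgroup G) [DecidablePred (· ∈ H)]

/-- The induced module `Ind_H^G(M)`. -/
def IndSub {M : Type*} [AddCommGroup M] [Module R M]
    (act : ↥H →* Module.End R M) : Submodule R (G → M) where
  carrier := {f | (Set.Finite ((fun s : G => (QuotientGroup.mk s : G ⧸ H)) ''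
      Function.support f)) ∧ ∀ (s : G) (h : H), f s = act h (f (s * (h : G)))}
  add_mem' := by
    rintro f f' ⟨hf1, hf2⟩ ⟨hf1', hf2'⟩
    refine ⟨(hf1.union hf1').subset ?_, fun s h => ?_⟩
    · rw [← Set.image_union]
      exact Set.image_mono (Function.support_add _ _)
    · show f s + f' s = act h (f (s * h) + f' (s * h))
      rw [map_add, ← hf2 s h, ← hf2' s h]
  zero_mem' := by
    refine ⟨?_, fun s h => by simp⟩
    simp
  smul_mem' := by
    rintro r f ⟨hf1, hf2⟩
    refine ⟨hf1.subset (Set.image_mono (Function.support_const_smul_subset r f)),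
      fun s h => ?_⟩
    show r • f s = act h (r • f (s * h))
    rw [map_smul, ← hf2 s h]

/-- The element `ξ_H(g,m)` of `Ind_H^G(M)`. -/
def xiP {M : Type*} [AddCommGroup M] [Module R M] (act : ↥H →* Module.End R M)
    (g : G) (m : M) : G → M := fun s =>
  if hs : g⁻¹ * s ∈ H then act (⟨g⁻¹ * s, hs⟩ : H)⁻¹ m else 0

theorem xiP_mem {M : Type*} [AddCommGroup M] [Module R M] (act : ↥H →* Module.End R M)
    (g : G) (m : M) : xiP H act g m ∈ IndSub H act := by
  constructor
  · refine (Set.finite_singleton ((QuotientGroup.mk g : G ⧸ H))).subset ?_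
    rintro q ⟨s, hs, rfl⟩
    have hmem : g⁻¹ * s ∈ H := by
      by_contra hc
      exact hs (by simp [xiP, hc])
    exact Set.mem_singleton_iff.mpr ((QuotientGroup.eq.mpr hmem).symm)
  · intro s h
    by_cases hs : g⁻¹ * s ∈ H
    · have hsh : g⁻¹ * (s * (h : G)) ∈ H := by
        have := mul_mem hs h.2
        simpa [mul_assoc] using this
      have key : (⟨g⁻¹ * s, hs⟩ : H)⁻¹ = h * (⟨g⁻¹ * (s * (h : G)), hsh⟩ : H)⁻¹ := by
        apply Subtype.ext
        simp [mul_inv_rev, mul_assoc]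
      show (if hs : g⁻¹ * s ∈ H then act (⟨g⁻¹ * s, hs⟩ : H)⁻¹ m else 0) = _
      rw [dif_pos hs, key, map_mul]
      simp [xiP, dif_pos hsh]
    · have hsh : ¬ (g⁻¹ * (s * (h : G)) ∈ H) := by
        intro hc
        apply hs
        have := mul_mem hc (inv_mem h.2)
        simpa [mul_assoc] using this
      show (if hs : g⁻¹ * s ∈ H then act (⟨g⁻¹ * s, hs⟩ : H)⁻¹ m else 0) = _
      rw [dif_neg hs]
      simp [xiP, dif_neg hsh]

theorem ind_trans_mem {M : Type*} [AddCommGroup M] [Module R M]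
    (act : ↥H →* Module.End R M) (g : G) {f : G → M} (hf : f ∈ IndSub H act) :
    (fun s => f (g⁻¹ * s)) ∈ IndSub H act := by
  obtain ⟨hf1, hf2⟩ := hf
  constructor
  · refine (hf1.image (fun q => g • q)).subset ?_
    rintro q ⟨s, hs, rfl⟩
    refine ⟨QuotientGroup.mk (g⁻¹ * s), ⟨g⁻¹ * s, hs, rfl⟩, ?_⟩
    show (g * (g⁻¹ * s) : G) = (s : G ⧸ H)
    rw [mul_inv_cancel_left]
  · intro s h
    simpa [mul_assoc] using hf2 (g⁻¹ * s) h

theorem ind_mul_mem {B : Type*} [NonUnitalRing B] [Module R B]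
    (act : ↥H →* Module.End R B)
    (hact : ∀ (h : ↥H) (x y : B), act h (x * y) = act h x * act h y)
    {f f' : G → B} (hf : f ∈ IndSub H act) (hf' : f' ∈ IndSub H act) :
    f * f' ∈ IndSub H act := by
  refine ⟨hf.1.subset (Set.image_mono (Function.support_mul_subset_left _ _)),
    fun s h => ?_⟩
  show f s * f' s = act h (f (s * h) * f' (s * h))
  rw [hact, ← hf.2 s h, ← hf'.2 s h]

variable {A : Type*} [NonUnitalRing A] [Module R A] [DistribMulAction G A]
  [SMulCommClass G R A]

/-- The restriction to `H` of the `G`-action on `A`, as linear endomorphisms. -/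
noncomputable def resAct : ↥H →* Module.End R A :=
  (DistribMulAction.toModuleEnd R A).comp H.subtype

/-- Multiplication on `ℓ^{(G/H)} ⊗ A`, modelled as `G ⧸ H →₀ A`
(the element `χ_q ⊗ a` being `single q a`): pointwise in the `G/H`-coordinate. -/
noncomputable def cosetMul [DecidableEq (G ⧸ H)] (x y : (G ⧸ H) →₀ A) : (G ⧸ H) →₀ A :=
  Finsupp.sum x fun q a => Finsupp.sum y fun q' a' =>
    if q = q' then Finsupp.single q (a * a') else 0

/-- The diagonal `G`-action on `ℓ^{(G/H)} ⊗ A ≅ (G ⧸ H) →₀ A`: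
`g·(χ_{sH} ⊗ a) = χ_{gsH} ⊗ g·a`. -/
noncomputable def cosetAct (g : G) (x : (G ⧸ H) →₀ A) : (G ⧸ H) →₀ A :=
  Finsupp.sum x fun q a => Finsupp.single (g • q) (g • a)

end

theorem Finsupp.ite_single_apply_eq_mul {α β : Type*} [DecidableEq α] [MulZeroClass β]
    (q₁ q₂ q : α) (b₁ b₂ : β) :
    (if q₁ = q₂ then Finsupp.single q₁ (b₁ * b₂) else 0) q =
      Finsupp.single q₁ b₁ q * Finsupp.single q₂ b₂ q := by
  by_cases h : q₁ = q₂
  · subst h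
    rw [if_pos rfl, Finsupp.single_mul, Finsupp.mul_apply]
  · rw [if_neg h, Finsupp.single_apply, Finsupp.single_apply]
    split_ifs <;> simp_all

section CosetFinsupp

variable {G : Type*} [Group G] {H : Subgroup G} {A : Type*} [NonUnitalRing A]

theorem cosetMul_apply [DecidableEq (G ⧸ H)] (x y : G ⧸ H →₀ A) (q : G ⧸ H) :
    cosetMul H x y q = x q * y q := by
  have sum_single_apply (z : G ⧸ H →₀ A) : (z.sum fun q' a => Finsupp.single q' a q) = z q := by
    rw [← Finsupp.sum_apply, Finsupp.sum_single]
  simp only [cosetMul, Finsupp.sum_apply, Finsupp.ite_single_apply_eq_mul]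
  rw [← sum_single_apply x, ← sum_single_apply y, Finsupp.sum_mul]
  simp only [Finsupp.mul_sum]

theorem cosetAct_apply [DistribMulAction G A] (g : G) (x : G ⧸ H →₀ A) (q : G ⧸ H) :
    cosetAct H g x q = g • x (g⁻¹ • q) := by
  classical
  simp only [cosetAct, Finsupp.sum_apply, Finsupp.single_apply, smul_eq_iff_eq_inv_smul]
  rw [Finsupp.sum_ite_eq']
  simp +contextual

end CosetFinsupp

@[simp]
theorem resAct_apply {R G : Type*} [CommRing R] [Group G] {H : Subgroup G} {A : Type*}
    [NonUnitalRing A] [Module R A] [DistribMulAction G A] [SMulCommClass G R A] (h : H) (a : A) :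
    resAct (R := R) H h a = (h : G) • a :=
  rfl

namespace IndSub

variable {R G : Type*} [CommRing R] [Group G] {H : Subgroup G}
  {A : Type*} [NonUnitalRing A] [Module R A] [DistribMulAction G A] [SMulCommClass G R A]

theorem smul_apply_eq_of_mk_eq {f : G → A} (hf : f ∈ IndSub H (resAct (R := R) H))
    {s t : G} (hst : (s : G ⧸ H) = t) : s • f s = t • f t := by
  have hf_st : f s = (s⁻¹ * t) • f (s * (s⁻¹ * t)) := hf.2 s ⟨_, QuotientGroup.eq.mp hst⟩
  rw [hf_st, smul_smul, mul_inv_cancel_left]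

theorem inv_smul_comp_mk_mem (x : G ⧸ H →₀ A) :
    (fun s : G => s⁻¹ • x s) ∈ IndSub H (resAct (R := R) H) := by
  refine ⟨x.support.finite_toSet.subset ?_, fun s h => ?_⟩
  · rintro _ ⟨s, hs, rfl⟩
    exact Finsupp.mem_support_iff.mpr fun hx => hs (by simp [hx])
  · have hsh : ((s * h : G) : G ⧸ H) = s := QuotientGroup.mk_mul_of_mem s h.2
    change s⁻¹ • x s = (h : G) • (s * h)⁻¹ • x ↑(s * h)
    rw [hsh, smul_smul, mul_inv_rev, mul_inv_cancel_left]

variable (H) in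
noncomputable def toFinsupp (f : IndSub H (resAct (R := R) H (A := A))) : G ⧸ H →₀ A :=
  Finsupp.onFinset f.2.1.toFinset (fun q => q.out • (f : G → A) q.out) fun q hq =>
    f.2.1.mem_toFinset.mpr ⟨q.out, fun hf => hq (by simp [hf]), QuotientGroup.out_eq' q⟩

@[simp]
theorem toFinsupp_apply_mk (f : IndSub H (resAct (R := R) H (A := A))) (s : G) :
    toFinsupp H f s = s • (f : G → A) s :=
  smul_apply_eq_of_mk_eq f.2 (QuotientGroup.out_eq' _)

variable (R H A) in
noncomputable def indResEquiv : IndSub H (resAct (R := R) H (A := A)) ≃ₗ[R] (G ⧸ H →₀ A) where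
  toFun := toFinsupp H
  invFun x := ⟨fun s => s⁻¹ • x s, inv_smul_comp_mk_mem x⟩
  map_add' f f' := by
    ext q
    induction q using QuotientGroup.induction_on
    simp
  map_smul' r f := by
    ext q
    induction q using QuotientGroup.induction_on
    simp [smul_comm]
  left_inv f := by
    ext s
    simp
  right_inv x := by
    ext q
    induction q using QuotientGroup.induction_on
    simp

@[simp]
theorem indResEquiv_apply_mk (f : IndSub H (resAct (R := R) H (A := A))) (s : G) :
    indResEquiv R H A f s = s • (f : G → A) s :=
  toFinsupp_apply_mk f s

theorem indResEquiv_xiP [DecidablePred (· ∈ H)] (s : G) (b : A) :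
    indResEquiv R H A ⟨xiP H (resAct H) s b, xiP_mem H _ s b⟩ =
      Finsupp.single (s : G ⧸ H) (s • b) := by
  ext q
  induction q using QuotientGroup.induction_on with | H t => ?_
  rw [indResEquiv_apply_mk, Finsupp.single_apply]
  by_cases h : s⁻¹ * t ∈ H
  · simp [xiP, h, QuotientGroup.eq.mpr h, smul_smul]
  · simp [xiP, h, QuotientGroup.eq]

theorem cosetMul_indResEquiv [DecidableEq (G ⧸ H)]
    (hmul : ∀ (g : G) (a b : A), g • (a * b) = g • a * g • b)
    (x y : IndSub H (resAct (R := R) H (A := A)))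
    (hxy : (x : G → A) * y ∈ IndSub H (resAct H)) :
    cosetMul H (indResEquiv R H A x) (indResEquiv R H A y) = indResEquiv R H A ⟨_, hxy⟩ := by
  ext q
  induction q using QuotientGroup.induction_on with | H t => ?_
  simp [cosetMul_apply, hmul]

theorem cosetAct_indResEquiv (g : G) (x : IndSub H (resAct (R := R) H (A := A)))
    (hx : (fun s => (x : G → A) (g⁻¹ * s)) ∈ IndSub H (resAct H)) :
    cosetAct H g (indResEquiv R H A x) = indResEquiv R H A ⟨_, hx⟩ := by
  ext q
  induction q using QuotientGroup.induction_on with | H t => ?_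
  simp [cosetAct_apply, smul_smul]

end IndSub

section

variable {R G : Type*} [CommRing R] [Group G] (H : Subgroup G) [DecidablePred (· ∈ H)]

variable {A : Type*} [NonUnitalRing A] [Module R A] [DistribMulAction G A]
  [SMulCommClass G R A]

/-- Let `H ≤ G` and `A` a `G`-algebra. The map `ξ_H(s,b) ↦ χ_{sH} ⊗ (s·b)`
is an isomorphism of `G`-algebras `Ind_H^G(Res_H^G A) ≅ ℓ^{(G/H)} ⊗ A`: an `ℓ`-linear
equivalence, given on generators by this formula, which is multiplicative and
`G`-equivariant. -/
theorem ind_res_iso [DecidableEq (G ⧸ H)]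
    (hmulA : ∀ (g : G) (x y : A), g • (x * y) = (g • x) * (g • y)) :
    ∃ e : ↥(IndSub H (resAct (R := R) H (A := A))) ≃ₗ[R] ((G ⧸ H) →₀ A),
      (∀ (s : G) (b : A),
        e ⟨xiP H (resAct H) s b, xiP_mem H _ s b⟩ =
          Finsupp.single (QuotientGroup.mk s : G ⧸ H) (s • b)) ∧
      (∀ x y : ↥(IndSub H (resAct (R := R) H (A := A))),
        cosetMul H (e x) (e y) = e ⟨(↑x : G → A) * ↑y, ind_mul_mem H _ (fun h x y => hmulA h x y) x.2 y.2⟩) ∧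
      (∀ (g : G) (x : ↥(IndSub H (resAct (R := R) H (A := A)))),
        cosetAct H g (e x) = e ⟨fun s => (↑x : G → A) (g⁻¹ * s), ind_trans_mem H _ g x.2⟩) :=
  ⟨IndSub.indResEquiv R H A, IndSub.indResEquiv_xiP,
    fun x y => IndSub.cosetMul_indResEquiv hmulA x y _,
    fun g x => IndSub.cosetAct_indResEquiv g x _⟩

end
end

section
/- Let B be a G-graded algebra. Then (G ⋊̂ B) ⋊ G ≅ M_G ⊗ B as G-graded algebras, via T(χ_h ⋊ b ⋊ s) = Σ_{r∈G} e_{h, s⁻¹hr} ⊗ b_r, with inverse S(e_{r,s} ⊗ b_q) = χ_r ⋊ b_q ⋊ rqs⁻¹ (for b_q homogeneous of degree q), where M_G ⊗ B carries the grading in which e_{s,t} ⊗ b is homogeneous of degree s·|b|·t⁻¹. -/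
/-!
Every element of `(G ⋊̂ B) ⋊ G` is a sum of generators `χ_h ⋊ x ⋊ s` with `x` homogeneous
of some degree `q`, and `T` sends such a generator to the single matrix unit
`e_{h, s⁻¹hq} ⊗ x`, of degree `h q (s⁻¹hq)⁻¹ = s`, while `S` sends it back. So the inverse
relations, the grading and multiplicativity need only be checked on generators, where they are
identities in `G`: the product of two generators is again a generator (`x_q y_r` has degree
`qr`) precisely when the corresponding matrix units compose, and is zero otherwise.
-/

section

variable {R G B : Type*} [CommRing R] [Group G] [DecidableEq G] [NonUnitalRing B]
  [Module R B]

/-- Multiplication of the dual crossed product `G ⋊̂ B` of a `G`-graded algebra `B`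
(grading encoded by homogeneous-component projections `p`), modelled on `G →₀ B`:
`(χ_g ⋊ a)(χ_h ⋊ b) = χ_g ⋊ a_{g⁻¹h}·b`. -/
noncomputable def hatMul (p : G → Module.End R B) (x y : G →₀ B) : G →₀ B :=
  Finsupp.sum x fun g a => Finsupp.sum y fun h b =>
    Finsupp.single g (p (g⁻¹ * h) a * b)

/-- Multiplication of `(G ⋊̂ B) ⋊ G`, modelled on `G →₀ (G →₀ B)`, where
`χ_h ⋊ b ⋊ s` is `single s (single h b)` (the outer coordinate records the `G`-grading):
`(c ⋊ s)(d ⋊ t) = c·(s·d) ⋊ st`, with `s·(χ_g ⋊ b) = χ_{sg} ⋊ b`. -/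
noncomputable def crossedHatMul (p : G → Module.End R B) (x y : G →₀ (G →₀ B)) :
    G →₀ (G →₀ B) :=
  Finsupp.sum x fun s c => Finsupp.sum y fun t d =>
    Finsupp.single (s * t) (hatMul p c (Finsupp.mapDomain (fun g => s * g) d))

/-- Multiplication on `M_G ⊗ B`, modelled as `(G × G) →₀ B`
(the element `b ⊗ e_{u,v}` being `single (u,v) b`). -/
noncomputable def matBMul (x y : (G × G) →₀ B) : (G × G) →₀ B :=
  Finsupp.sum x fun pq a => Finsupp.sum y fun rs b =>
    if pq.2 = rs.1 then Finsupp.single (pq.1, rs.2) (a * b) else 0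

/-- The degree-`s` homogeneous component of `M_G ⊗ B`, spanned by the elements
`e_{u,v} ⊗ b` with `b` homogeneous of degree `q` and `s = u·q·v⁻¹`. -/
noncomputable def matGrading (p : G → Module.End R B) (s : G) :
    Submodule R ((G × G) →₀ B) :=
  Submodule.span R {x | ∃ (u v q : G) (b : B),
    u * q * v⁻¹ = s ∧ x = Finsupp.single (u, v) (p q b)}

set_option linter.unusedSectionVars false

namespace Finsupp

variable {α β M N X : Type*} [AddZeroClass M] [AddZeroClass N] [AddCommMonoid X]

theorem sum_sum_add_left {f : α → M → β → N → X} (hzero : ∀ i j b, f i 0 j b = 0)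
    (hadd : ∀ i a a' j b, f i (a + a') j b = f i a j b + f i a' j b)
    (x x' : α →₀ M) (y : β →₀ N) :
    ((x + x').sum fun i a => y.sum (f i a)) =
      (x.sum fun i a => y.sum (f i a)) + x'.sum fun i a => y.sum (f i a) :=
  sum_add_index' (fun i => by simp [Finsupp.sum, hzero])
    fun i a a' => by simp [Finsupp.sum, hadd, Finset.sum_add_distrib]

theorem sum_sum_add_right {f : α → M → β → N → X} (hzero : ∀ i a j, f i a j 0 = 0)
    (hadd : ∀ i a j b b', f i a j (b + b') = f i a j b + f i a j b')
    (x : α →₀ M) (y y' : β →₀ N) :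
    (x.sum fun i a => (y + y').sum (f i a)) =
      (x.sum fun i a => y.sum (f i a)) + x.sum fun i a => y'.sum (f i a) := by
  rw [← sum_add]
  exact sum_congr fun i _ => sum_add_index' (hzero i _) (hadd i _)

end Finsupp

section Multiplications

variable (p : G → Module.End R B)

theorem hatMul_add_left (x x' y : G →₀ B) :
    hatMul p (x + x') y = hatMul p x y + hatMul p x' y :=
  Finsupp.sum_sum_add_left (by simp) (by simp [add_mul]) x x' y

theorem hatMul_add_right (x y y' : G →₀ B) :
    hatMul p x (y + y') = hatMul p x y + hatMul p x y' :=
  Finsupp.sum_sum_add_right (by simp) (by simp [mul_add]) x y y'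

theorem crossedHatMul_add_left (x x' y : G →₀ (G →₀ B)) :
    crossedHatMul p (x + x') y = crossedHatMul p x y + crossedHatMul p x' y :=
  Finsupp.sum_sum_add_left (by simp [hatMul]) (by simp [hatMul_add_left]) x x' y

theorem crossedHatMul_add_right (x y y' : G →₀ (G →₀ B)) :
    crossedHatMul p x (y + y') = crossedHatMul p x y + crossedHatMul p x y' :=
  Finsupp.sum_sum_add_right (by simp [hatMul])
    (by simp [Finsupp.mapDomain_add, hatMul_add_right]) x y y'

theorem crossedHatMul_single_single (s t h k : G) (b c : B) :
    crossedHatMul p (Finsupp.single s (Finsupp.single h b))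
        (Finsupp.single t (Finsupp.single k c)) =
      Finsupp.single (s * t) (Finsupp.single h (p (h⁻¹ * (s * k)) b * c)) := by
  simp [crossedHatMul, hatMul]

theorem matBMul_add_left (x x' y : (G × G) →₀ B) :
    matBMul (x + x') y = matBMul x y + matBMul x' y :=
  Finsupp.sum_sum_add_left (by simp) (by intros; split_ifs <;> simp [add_mul]) x x' y

theorem matBMul_add_right (x y y' : (G × G) →₀ B) :
    matBMul x (y + y') = matBMul x y + matBMul x y' :=
  Finsupp.sum_sum_add_right (by simp) (by intros; split_ifs <;> simp [mul_add]) x y y'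

theorem matBMul_single_single (u v w z : G) (a b : B) :
    matBMul (Finsupp.single (u, v) a) (Finsupp.single (w, z) b) =
      if v = w then Finsupp.single (u, z) (a * b) else 0 := by
  simp [matBMul]

end Multiplications

section GradedIso

variable (p : G → Module.End R B)
  (hortho : ∀ g h : G, g ≠ h → ∀ b : B, p g (p h b) = 0)
  (hfin : ∀ b : B, (Function.support fun g => p g b).Finite)
  (hsum : ∀ b : B, b = ∑ᶠ g : G, p g b)
  (hgr : ∀ (g t : G) (x y : B), p t (p g x * y) = p g x * p (g⁻¹ * t) y)

include hortho hfin hsum in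
theorem proj_idem (g : G) (b : B) : p g (p g b) = p g b := by
  conv_rhs => rw [hsum b, map_finsum (p g) (hfin b)]
  rw [finsum_eq_single _ g fun h hne => hortho g h hne.symm b]

include hortho in
theorem proj_apply_of_homogeneous {q : G} {x : B} (hx : p q x = x) (g : G) :
    p g x = if g = q then x else 0 := by
  split_ifs with hg
  · rw [hg, hx]
  · rw [← hx, hortho g q hg]

include hgr in
theorem proj_mul_of_homogeneous {q r : G} {x y : B} (hx : p q x = x) (hy : p r y = y) :
    p (q * r) (x * y) = x * y := by
  rw [← hx, hgr, inv_mul_cancel_left, hx, hy]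

include hortho hfin hsum in
@[elab_as_elim]
theorem induction_homogeneous {P : B → Prop} (zero : P 0)
    (add : ∀ x y, P x → P y → P (x + y)) (homogeneous : ∀ q x, p q x = x → P x) (b : B) :
    P b := by
  rw [hsum b]
  exact finsum_induction P zero add fun g => homogeneous g _ (proj_idem p hortho hfin hsum g b)

include hortho hfin hsum in
@[elab_as_elim]
theorem induction_single_homogeneous {α : Type*} {P : (α →₀ B) → Prop} (zero : P 0)
    (add : ∀ x y, P x → P y → P (x + y))
    (single : ∀ a q x, p q x = x → P (Finsupp.single a x)) (x : α →₀ B) : P x :=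
  Finsupp.induction_linear x zero add fun a =>
    induction_homogeneous p hortho hfin hsum (P := fun b => P (Finsupp.single a b))
      (by simpa using zero) (fun b c hb hc => by simpa using add _ _ hb hc) (single a)

include hortho hfin hsum in
@[elab_as_elim]
theorem induction_single_single_homogeneous {P : (G →₀ (G →₀ B)) → Prop} (zero : P 0)
    (add : ∀ x y, P x → P y → P (x + y))
    (single : ∀ s h q x, p q x = x → P (Finsupp.single s (Finsupp.single h x)))
    (x : G →₀ (G →₀ B)) : P x :=
  Finsupp.induction_linear x zero add fun s =>
    induction_single_homogeneous p hortho hfin hsum (P := fun c => P (Finsupp.single s c))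
      (by simpa using zero) (fun c d hc hd => by simpa using add _ _ hc hd) (single s)

noncomputable def homogeneousComponents : B →ₗ[R] (G →₀ B) where
  toFun b := Finsupp.ofSupportFinite (fun g => p g b) (hfin b)
  map_add' x y := by ext g; simp [Finsupp.ofSupportFinite_coe]
  map_smul' r x := by ext g; simp [Finsupp.ofSupportFinite_coe]

include hortho in
theorem homogeneousComponents_of_homogeneous {q : G} {x : B} (hx : p q x = x) :
    homogeneousComponents p hfin x = Finsupp.single q x := by
  ext g
  simp [homogeneousComponents, Finsupp.ofSupportFinite_coe,
    proj_apply_of_homogeneous p hortho hx, Finsupp.single_apply, eq_comm]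

noncomputable def crossedHatToMat : (G →₀ (G →₀ B)) →ₗ[R] ((G × G) →₀ B) :=
  Finsupp.lsum R fun s => Finsupp.lsum R fun h =>
    (Finsupp.lsum R fun r => Finsupp.lsingle (h, s⁻¹ * h * r)) ∘ₗ
      homogeneousComponents p hfin

noncomputable def matToCrossedHat : ((G × G) →₀ B) →ₗ[R] (G →₀ (G →₀ B)) :=
  Finsupp.lsum R fun uv => (Finsupp.lsum R fun q =>
      Finsupp.lsingle (uv.1 * q * uv.2⁻¹) ∘ₗ Finsupp.lsingle uv.1) ∘ₗ
        homogeneousComponents p hfin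

include hortho in
theorem crossedHatToMat_single_of_homogeneous (s h : G) {q : G} {x : B} (hx : p q x = x) :
    crossedHatToMat p hfin (Finsupp.single s (Finsupp.single h x)) =
      Finsupp.single (h, s⁻¹ * h * q) x := by
  rw [crossedHatToMat, Finsupp.lsum_single, Finsupp.lsum_single, LinearMap.comp_apply,
    homogeneousComponents_of_homogeneous p hortho hfin hx, Finsupp.lsum_single,
    Finsupp.lsingle_apply]

include hortho in
theorem matToCrossedHat_single_of_homogeneous (u v : G) {q : G} {x : B} (hx : p q x = x) :
    matToCrossedHat p hfin (Finsupp.single (u, v) x) =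
      Finsupp.single (u * q * v⁻¹) (Finsupp.single u x) := by
  rw [matToCrossedHat, Finsupp.lsum_single, LinearMap.comp_apply,
    homogeneousComponents_of_homogeneous p hortho hfin hx, Finsupp.lsum_single]
  rfl

include hortho hsum in
theorem matToCrossedHat_comp_crossedHatToMat :
    matToCrossedHat p hfin ∘ₗ crossedHatToMat p hfin = LinearMap.id := by
  refine LinearMap.ext fun x => induction_single_single_homogeneous p hortho hfin hsum
    (by simp) (fun x y hx hy => by rw [map_add, map_add, hx, hy]) (fun s h q x hx => ?_) x
  rw [LinearMap.comp_apply, crossedHatToMat_single_of_homogeneous p hortho hfin s h hx,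
    matToCrossedHat_single_of_homogeneous p hortho hfin _ _ hx]
  simp

include hortho hsum in
theorem crossedHatToMat_comp_matToCrossedHat :
    crossedHatToMat p hfin ∘ₗ matToCrossedHat p hfin = LinearMap.id := by
  refine LinearMap.ext fun x => induction_single_homogeneous p hortho hfin hsum
    (by simp) (fun x y hx hy => by rw [map_add, map_add, hx, hy]) (fun uv q x hx => ?_) x
  rw [LinearMap.comp_apply, matToCrossedHat_single_of_homogeneous p hortho hfin _ _ hx,
    crossedHatToMat_single_of_homogeneous p hortho hfin _ _ hx]
  simp [mul_assoc]

include hortho hsum in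
theorem crossedHatToMat_single_single (s h : G) (b : B) :
    crossedHatToMat p hfin (Finsupp.single s (Finsupp.single h b)) =
      ∑ᶠ r : G, Finsupp.single (h, s⁻¹ * h * r) (p r b) :=
  calc crossedHatToMat p hfin (Finsupp.single s (Finsupp.single h b))
      = (crossedHatToMat p hfin ∘ₗ Finsupp.lsingle s ∘ₗ Finsupp.lsingle h)
          (∑ᶠ r : G, p r b) := by rw [← hsum b]; rfl
    _ = ∑ᶠ r : G, crossedHatToMat p hfin (Finsupp.single s (Finsupp.single h (p r b))) :=
      map_finsum _ (hfin b)
    _ = ∑ᶠ r : G, Finsupp.single (h, s⁻¹ * h * r) (p r b) := finsum_congr fun r =>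
      crossedHatToMat_single_of_homogeneous p hortho hfin s h (proj_idem p hortho hfin hsum r b)

include hortho hgr in
theorem crossedHatToMat_mul_of_homogeneous (s h t k : G) {q r : G} {x y : B}
    (hx : p q x = x) (hy : p r y = y) :
    crossedHatToMat p hfin (crossedHatMul p (Finsupp.single s (Finsupp.single h x))
        (Finsupp.single t (Finsupp.single k y))) =
      matBMul (crossedHatToMat p hfin (Finsupp.single s (Finsupp.single h x)))
        (crossedHatToMat p hfin (Finsupp.single t (Finsupp.single k y))) := by
  rw [crossedHatMul_single_single, crossedHatToMat_single_of_homogeneous p hortho hfin s h hx,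
    crossedHatToMat_single_of_homogeneous p hortho hfin t k hy, matBMul_single_single,
    proj_apply_of_homogeneous p hortho hx]
  -- `χ_h x` meets `χ_{sk} y` nontrivially iff `q = h⁻¹sk`, i.e. iff the matrix units compose.
  by_cases hk : s⁻¹ * h * q = k
  · subst hk
    rw [if_pos (by group), if_pos rfl, crossedHatToMat_single_of_homogeneous p hortho hfin _ _
      (proj_mul_of_homogeneous p hgr hx hy)]
    congr 2
    group
  · rw [if_neg (by rintro rfl; apply hk; group), if_neg hk]
    simp

include hortho hsum hgr in
theorem crossedHatToMat_mul (x y : G →₀ (G →₀ B)) :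
    crossedHatToMat p hfin (crossedHatMul p x y) =
      matBMul (crossedHatToMat p hfin x) (crossedHatToMat p hfin y) := by
  refine induction_single_single_homogeneous p hortho hfin hsum
    (P := fun x => ∀ y, crossedHatToMat p hfin (crossedHatMul p x y) =
      matBMul (crossedHatToMat p hfin x) (crossedHatToMat p hfin y))
    (fun y => by simp [crossedHatMul, matBMul])
    (fun x x' hx hx' y => by
      rw [crossedHatMul_add_left, map_add, map_add, matBMul_add_left, hx, hx'])
    (fun s h q x hx y => ?_) x y
  refine induction_single_single_homogeneous p hortho hfin hsum (by simp [crossedHatMul, matBMul])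
    (fun y y' hy hy' => by
      rw [crossedHatMul_add_right, map_add, map_add, matBMul_add_right, hy, hy'])
    (fun t k r y hy => crossedHatToMat_mul_of_homogeneous p hortho hfin hgr s h t k hx hy) y

include hortho hsum in
theorem crossedHatToMat_single_mem_matGrading (s : G) (c : G →₀ B) :
    crossedHatToMat p hfin (Finsupp.single s c) ∈ matGrading p s := by
  refine induction_single_homogeneous p hortho hfin hsum
    (P := fun c => crossedHatToMat p hfin (Finsupp.single s c) ∈ matGrading p s)
    (by simp) (fun c d hc hd => by simpa using add_mem hc hd) (fun h q x hx => ?_) c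
  rw [crossedHatToMat_single_of_homogeneous p hortho hfin s h hx]
  exact Submodule.subset_span ⟨h, s⁻¹ * h * q, q, x, by group, by rw [hx]⟩

end GradedIso

theorem baaj_skandalis_graded_iso_general (p : G → Module.End R B)
    (hortho : ∀ g h : G, g ≠ h → ∀ b : B, p g (p h b) = 0)
    (hfin : ∀ b : B, (Function.support fun g => p g b).Finite)
    (hsum : ∀ b : B, b = ∑ᶠ g : G, p g b)
    (hgr : ∀ (g t : G) (x y : B), p t (p g x * y) = p g x * p (g⁻¹ * t) y) :
    ∃ e : (G →₀ (G →₀ B)) ≃ₗ[R] ((G × G) →₀ B),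
      (∀ (s h : G) (b : B),
        e (Finsupp.single s (Finsupp.single h b)) =
          ∑ᶠ r : G, Finsupp.single (h, s⁻¹ * h * r) (p r b)) ∧
      (∀ (r s q : G) (b : B),
        e.symm (Finsupp.single (r, s) (p q b)) =
          Finsupp.single (r * q * s⁻¹) (Finsupp.single r (p q b))) ∧
      (∀ x y : G →₀ (G →₀ B), e (crossedHatMul p x y) = matBMul (e x) (e y)) ∧
      (∀ (s : G) (c : G →₀ B), e (Finsupp.single s c) ∈ matGrading p s) :=
  ⟨.ofLinearMap (crossedHatToMat p hfin) (matToCrossedHat p hfin)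
      (crossedHatToMat_comp_matToCrossedHat p hortho hfin hsum)
      (matToCrossedHat_comp_crossedHatToMat p hortho hfin hsum),
    crossedHatToMat_single_single p hortho hfin hsum,
    fun r s q b => matToCrossedHat_single_of_homogeneous p hortho hfin r s
      (proj_idem p hortho hfin hsum q b),
    crossedHatToMat_mul p hortho hfin hsum hgr,
    crossedHatToMat_single_mem_matGrading p hortho hfin hsum⟩

/-- Let `B` be a `G`-graded algebra, with homogeneous-component projections
`p`. Then `(G ⋊̂ B) ⋊ G ≅ M_G ⊗ B` as `G`-graded algebras, via
`T(χ_h ⋊ b ⋊ s) = Σ_{r∈G} e_{h, s⁻¹hr} ⊗ b_r`, with inverse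
`S(e_{r,s} ⊗ b_q) = χ_r ⋊ b_q ⋊ rqs⁻¹` for `b_q` homogeneous of degree `q`, where `M_G ⊗ B`
carries the grading in which `e_{u,v} ⊗ b` is homogeneous of degree `u·|b|·v⁻¹`. -/
theorem baaj_skandalis_graded_iso (p : G → Module.End R B)
    (hortho : ∀ g h : G, g ≠ h → ∀ b : B, p g (p h b) = 0)
    (hidem : ∀ (g : G) (b : B), p g (p g b) = p g b)
    (hfin : ∀ b : B, (Function.support fun g => p g b).Finite)
    (hsum : ∀ b : B, b = ∑ᶠ g : G, p g b)
    (hgr : ∀ (g t : G) (x y : B), p t (p g x * y) = p g x * p (g⁻¹ * t) y) :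
    ∃ e : (G →₀ (G →₀ B)) ≃ₗ[R] ((G × G) →₀ B),
      (∀ (s h : G) (b : B),
        e (Finsupp.single s (Finsupp.single h b)) =
          ∑ᶠ r : G, Finsupp.single (h, s⁻¹ * h * r) (p r b)) ∧
      (∀ (r s q : G) (b : B),
        e.symm (Finsupp.single (r, s) (p q b)) =
          Finsupp.single (r * q * s⁻¹) (Finsupp.single r (p q b))) ∧
      (∀ x y : G →₀ (G →₀ B), e (crossedHatMul p x y) = matBMul (e x) (e y)) ∧
      (∀ (s : G) (c : G →₀ B), e (Finsupp.single s c) ∈ matGrading p s) :=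
  baaj_skandalis_graded_iso_general p hortho hfin hsum hgr

end
end
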